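/- arXiv:1603.04348 — 2 statements merged into one kernel-verified Lean document; each statement's English description precedes it below -/
import Mathlib

section
/- Canonical-from-expectation parameters formula for EP(n): with M(η) the n×n matrix with entries M_{i,j}(η) = η_{i+j} (1 ≤ i,j ≤ n) and the moments η_k = E_θ[x^k] of p(·,θ) ∈ EP(n), the vector (θ_1, 2θ_2, ..., nθ_n)ᵀ equals −M(η)⁻¹ · (2η_1, 3η_2, ..., (n+1)η_n)ᵀ, i.e., M(η)·(θ_1, 2θ_2, ..., nθ_n)ᵀ + (2η_1, 3η_2, ..., (n+1)η_n)ᵀ = 0, assuming M(η) is invertible. -/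
/-!
Integrating the derivative of `x ^ (i + 1) * p x` over `ℝ` gives `0`, since both this function and
its derivative are integrable. As `p' = p · ∑ k θₖ x^(k-1)`, this is the moment recursion
`(i + 1) ηᵢ + ∑ₖ k θₖ η_{i+k} = 0`; for `i = 1, …, n` these `n` equations are the rows of
`M(η) (θ₁, 2θ₂, …, nθₙ)ᵀ + (2η₁, …, (n+1)ηₙ)ᵀ = 0`, and inverting `M(η)` gives the formula.
-/

open MeasureTheory Real

theorem Finset.sum_Icc_one_eq_sum_fin {M : Type*} [AddCommMonoid M] (n : ℕ) (f : ℕ → M) :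
    ∑ k ∈ Finset.Icc 1 n, f k = ∑ j : Fin n, f (j + 1) := by
  rw [Fin.sum_univ_eq_sum_range (fun j => f (j + 1)), ← Finset.Ico_add_one_right_eq_Icc,
    Finset.sum_Ico_eq_sum_range]
  simp [add_comm]

section ExpPolynomialFamily

variable (s : Finset ℕ) (θ : ℕ → ℝ) (ψ : ℝ) {p : ℝ → ℝ}

theorem hasDerivAt_of_eq_exp_sum_pow (hp : ∀ x, p x = exp (∑ k ∈ s, θ k * x ^ k - ψ)) (x : ℝ) :
    HasDerivAt p (p x * ∑ k ∈ s, k * θ k * x ^ (k - 1)) x := by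
  have hsum : HasDerivAt (fun x => ∑ k ∈ s, θ k * x ^ k) (∑ k ∈ s, k * θ k * x ^ (k - 1)) x := by
    refine (HasDerivAt.fun_sum fun k _ => (hasDerivAt_pow k x).const_mul (θ k)).congr_deriv ?_
    simp only [mul_left_comm, mul_assoc]
  rw [funext hp]
  exact (hsum.sub_const ψ).exp

theorem hasDerivAt_pow_succ_mul (hp : ∀ x, p x = exp (∑ k ∈ s, θ k * x ^ k - ψ)) (i : ℕ)
    (x : ℝ) :
    HasDerivAt (fun x => x ^ (i + 1) * p x)
      ((i + 1) * (x ^ i * p x) + ∑ k ∈ s, k * θ k * (x ^ (i + k) * p x)) x := by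
  -- for `k = 0` both sides vanish, so the truncated `k - 1` does no harm
  have hterm (k : ℕ) :
      x ^ (i + 1) * (p x * (k * θ k * x ^ (k - 1))) = k * θ k * (x ^ (i + k) * p x) := by
    rcases k with _ | k
    · simp
    · simp only [add_tsub_cancel_right, ← add_assoc, pow_add, pow_one]
      ring
  refine ((hasDerivAt_pow (i + 1) x).fun_mul
    (hasDerivAt_of_eq_exp_sum_pow s θ ψ hp x)).congr_deriv ?_
  simp only [Finset.mul_sum, hterm, add_tsub_cancel_right]
  push_cast
  ring

theorem moment_recursion (hp : ∀ x, p x = exp (∑ k ∈ s, θ k * x ^ k - ψ))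
    (hint : ∀ k, Integrable fun x => x ^ k * p x) (i : ℕ) :
    (i + 1) * (∫ x, x ^ i * p x) + ∑ k ∈ s, k * θ k * ∫ x, x ^ (i + k) * p x = 0 := by
  have hint_sum : Integrable fun x => ∑ k ∈ s, k * θ k * (x ^ (i + k) * p x) :=
    integrable_finsetSum _ fun k _ => (hint (i + k)).const_mul _
  calc (i + 1) * (∫ x, x ^ i * p x) + ∑ k ∈ s, k * θ k * ∫ x, x ^ (i + k) * p x
      = ∫ x, (i + 1) * (x ^ i * p x) + ∑ k ∈ s, k * θ k * (x ^ (i + k) * p x) := by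
        rw [integral_add ((hint i).const_mul _) hint_sum, integral_const_mul,
          integral_finsetSum _ fun k _ => (hint (i + k)).const_mul _]
        simp only [integral_const_mul]
    _ = 0 := integral_eq_zero_of_hasDerivAt_of_integrable
        (hasDerivAt_pow_succ_mul s θ ψ hp i) (((hint i).const_mul _).add hint_sum) (hint (i + 1))

end ExpPolynomialFamily

theorem stmt7_general (n : ℕ)
    (θ : ℕ → ℝ)
    (ψ : ℝ) (p : ℝ → ℝ)
    (hp : ∀ x : ℝ, p x = Real.exp ((∑ k ∈ Finset.Icc 1 n, θ k * x ^ k) - ψ))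
    (hint : ∀ k : ℕ, Integrable (fun x : ℝ => x ^ k * p x))
    (η : ℕ → ℝ) (hη : ∀ k, η k = ∫ x : ℝ, x ^ k * p x)
    (M : Matrix (Fin n) (Fin n) ℝ)
    (hM : ∀ i j : Fin n, M i j = η (((i : ℕ) + 1) + ((j : ℕ) + 1)))
    (hMinv : IsUnit M.det) :
    M.mulVec (fun j : Fin n => ((j : ℕ) + 1 : ℝ) * θ ((j : ℕ) + 1))
        + (fun i : Fin n => ((i : ℕ) + 2 : ℝ) * η ((i : ℕ) + 1)) = 0 ∧
    (fun j : Fin n => ((j : ℕ) + 1 : ℝ) * θ ((j : ℕ) + 1))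
        = -(M⁻¹.mulVec fun i : Fin n => ((i : ℕ) + 2 : ℝ) * η ((i : ℕ) + 1)) := by
  have hrows : M.mulVec (fun j : Fin n => ((j : ℕ) + 1 : ℝ) * θ ((j : ℕ) + 1))
      + (fun i : Fin n => ((i : ℕ) + 2 : ℝ) * η ((i : ℕ) + 1)) = 0 := by
    funext i
    have hrec := moment_recursion (Finset.Icc 1 n) θ ψ hp hint (i + 1)
    simp only [← hη, Finset.sum_Icc_one_eq_sum_fin] at hrec
    simp only [Pi.add_apply, Pi.zero_apply, Matrix.mulVec, dotProduct, hM, mul_comm (η _)]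
    push_cast at hrec ⊢
    linarith
  refine ⟨hrows, ?_⟩
  let := M.invertibleOfIsUnitDet hMinv
  rw [← Matrix.mulVec_neg, ← eq_neg_of_add_eq_zero_left hrows]
  exact (Matrix.inv_mulVec_eq_vec rfl).symm

/-- Canonical-from-expectation parameters formula for EP(n): with
`M_{i,j}(η) = η_{i+j}` (1 ≤ i,j ≤ n) and the moments `η_k = E_θ[x^k]`,
`M(η)·(θ_1, 2θ_2, ..., nθ_n)ᵀ + (2η_1, 3η_2, ..., (n+1)η_n)ᵀ = 0`, and, `M(η)`
being invertible, `(θ_1, 2θ_2, ..., nθ_n)ᵀ = −M(η)⁻¹·(2η_1, 3η_2, ..., (n+1)η_n)ᵀ`. -/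
theorem stmt7 (n : ℕ) (hn : Even n) (hn0 : 0 < n)
    (θ : ℕ → ℝ) (hθn : θ n < 0)
    (ψ : ℝ) (p : ℝ → ℝ)
    (hp : ∀ x : ℝ, p x = Real.exp ((∑ k ∈ Finset.Icc 1 n, θ k * x ^ k) - ψ))
    (hnorm : ∫ x : ℝ, p x = 1)
    (hint : ∀ k : ℕ, Integrable (fun x : ℝ => x ^ k * p x))
    (η : ℕ → ℝ) (hη : ∀ k, η k = ∫ x : ℝ, x ^ k * p x)
    (M : Matrix (Fin n) (Fin n) ℝ)
    (hM : ∀ i j : Fin n, M i j = η (((i : ℕ) + 1) + ((j : ℕ) + 1)))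
    (hMinv : IsUnit M.det) :
    M.mulVec (fun j : Fin n => ((j : ℕ) + 1 : ℝ) * θ ((j : ℕ) + 1))
        + (fun i : Fin n => ((i : ℕ) + 2 : ℝ) * η ((i : ℕ) + 1)) = 0 ∧
    (fun j : Fin n => ((j : ℕ) + 1 : ℝ) * θ ((j : ℕ) + 1))
        = -(M⁻¹.mulVec fun i : Fin n => ((i : ℕ) + 2 : ℝ) * η ((i : ℕ) + 1)) :=
  stmt7_general n θ ψ p hp hint η hη M hM hMinv
end

section
/- Galerkin equals direct-metric tangent projection for simple mixtures: the Galerkin system Σ_{i=1}^ℓ ⟨φ_i,φ_j⟩ ċ_i = Σ_{i=1}^ℓ ⟨φ_i, 𝓛φ_j⟩ c_i (j = 1,...,ℓ) for the approximation p̃_t = Σ_i c_i(t)φ_i of the FPK equation coincides with the L²-projected ODE θ̇^i = Σ_j γ^{ij} E_{θ}[𝓛(q_j − q_{n+1})] on the simple mixture family, when ℓ = n+1, c_i = θ_i and φ_i = q_i − q_{n+1} for i = 1,...,n, and c_{n+1} ≡ 1, φ_{n+1} = q_{n+1}. -/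
open MeasureTheory Real

/-- Galerkin equals direct-metric tangent projection for simple mixtures: with
`ℓ = n+1`, `c_i = θ_i`, `φ_i = q_i − q_{n+1}` (i ≤ n), `c_{n+1} ≡ 1`,
`φ_{n+1} = q_{n+1}`, the Galerkin system
`Σ_i ⟨φ_i,φ_j⟩ ċ_i = Σ_i ⟨φ_i, 𝓛φ_j⟩ c_i` coincides with the L²-projected ODE
`θ̇^k = Σ_j γ^{kj} E_θ[𝓛(q_j − q_{n+1})]` on the simple mixture family. -/
theorem stmt17 {N n : ℕ}
    (q : Fin (n + 1) → (Fin N → ℝ) → ℝ)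
    (φ : Fin (n + 1) → (Fin N → ℝ) → ℝ)
    (hφ : ∀ (i : Fin n) (x : Fin N → ℝ), φ i.castSucc x = q i.castSucc x - q (Fin.last n) x)
    (hφlast : ∀ x, φ (Fin.last n) x = q (Fin.last n) x)
    (θt θdot : ℝ → Fin n → ℝ)
    (cf cdot : Fin (n + 1) → ℝ → ℝ)
    (hcf : ∀ (i : Fin n) (t : ℝ), cf i.castSucc t = θt t i)
    (hcflast : ∀ t, cf (Fin.last n) t = 1)
    (hcdot : ∀ (i : Fin n) (t : ℝ), cdot i.castSucc t = θdot t i)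
    (hcdotlast : ∀ t, cdot (Fin.last n) t = 0)
    (Lφ : Fin (n + 1) → (Fin N → ℝ) → ℝ)  -- 𝓛 φ_j
    (pθ : ℝ → (Fin N → ℝ) → ℝ)
    (hpθ : ∀ t x, pθ t x = (∑ i : Fin n, θt t i * q i.castSucc x)
        + (1 - ∑ i : Fin n, θt t i) * q (Fin.last n) x)
    (γ γInv : Matrix (Fin n) (Fin n) ℝ)
    (hγ : ∀ i j : Fin n, γ i j = ∫ x, φ i.castSucc x * φ j.castSucc x)
    (hγInv : γ * γInv = 1 ∧ γInv * γ = 1)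
    (hintφ : ∀ i j : Fin (n + 1), Integrable (fun x => φ i x * φ j x))
    (hintL : ∀ i j : Fin (n + 1), Integrable (fun x => φ i x * Lφ j x)) :
    ∀ t : ℝ,
      ((∀ j : Fin n,
          (∑ i : Fin (n + 1), (∫ x, φ i x * φ j.castSucc x) * cdot i t)
            = ∑ i : Fin (n + 1), (∫ x, φ i x * Lφ j.castSucc x) * cf i t)
        ↔ (∀ k : Fin n,
            θdot t k = ∑ j : Fin n, γInv k j * ∫ x, Lφ j.castSucc x * pθ t x)) := by
  intro t
  -- pθ in terms of φ
  have hpθ' : ∀ x, pθ t x = (∑ i : Fin n, θt t i * φ i.castSucc x) + φ (Fin.last n) x := by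
    intro x
    rw [hpθ, hφlast]
    have h1 : ∀ i ∈ Finset.univ, θt t i * q i.castSucc x
        = θt t i * φ i.castSucc x + θt t i * q (Fin.last n) x := by
      intro i _; rw [hφ]; ring
    rw [Finset.sum_congr rfl h1, Finset.sum_add_distrib, ← Finset.sum_mul]
    ring
  -- b j : the projected right-hand side
  set b : Fin n → ℝ := fun j => ∫ x, Lφ j.castSucc x * pθ t x with hb
  have hbval : ∀ j : Fin n, b j
      = (∑ i : Fin n, θt t i * ∫ x, φ i.castSucc x * Lφ j.castSucc x)
        + ∫ x, φ (Fin.last n) x * Lφ j.castSucc x := by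
    intro j
    have e1 : ∀ x, Lφ j.castSucc x * pθ t x
        = (∑ i : Fin n, θt t i * (φ i.castSucc x * Lφ j.castSucc x))
          + φ (Fin.last n) x * Lφ j.castSucc x := by
      intro x
      rw [hpθ' x, mul_add, Finset.mul_sum]
      congr 1
      · exact Finset.sum_congr rfl fun i _ => by ring
      · ring
    have hintsum : Integrable (fun x => ∑ i : Fin n,
        θt t i * (φ i.castSucc x * Lφ j.castSucc x)) := by
      apply integrable_finset_sum
      intro i _
      exact (hintL i.castSucc j.castSucc).const_mul _
    calc b j = ∫ x, ((∑ i : Fin n, θt t i * (φ i.castSucc x * Lφ j.castSucc x))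
          + φ (Fin.last n) x * Lφ j.castSucc x) := by
          simp only [hb]; exact integral_congr_ae (Filter.Eventually.of_forall e1)
      _ = (∑ i : Fin n, θt t i * ∫ x, φ i.castSucc x * Lφ j.castSucc x)
          + ∫ x, φ (Fin.last n) x * Lφ j.castSucc x := by
          rw [integral_add hintsum (hintL (Fin.last n) j.castSucc),
            integral_finset_sum _ (fun i _ => (hintL i.castSucc j.castSucc).const_mul _)]
          congr 1
          exact Finset.sum_congr rfl fun i _ => by rw [integral_const_mul]
  -- rewrite the Galerkin RHS as b j
  have hRHS : ∀ j : Fin n,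
      (∑ i : Fin (n + 1), (∫ x, φ i x * Lφ j.castSucc x) * cf i t) = b j := by
    intro j
    rw [Fin.sum_univ_castSucc, hcflast, hbval, mul_one]
    simp only [hcf]
    congr 1
    exact Finset.sum_congr rfl fun i _ => mul_comm _ _
  -- rewrite the Galerkin LHS
  have hLHS : ∀ j : Fin n,
      (∑ i : Fin (n + 1), (∫ x, φ i x * φ j.castSucc x) * cdot i t)
        = ∑ i : Fin n, γ i j * θdot t i := by
    intro j
    rw [Fin.sum_univ_castSucc, hcdotlast]
    simp only [hcdot, hγ, mul_zero, add_zero]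
  -- symmetry of γ
  have hsym : ∀ a b : Fin n, γ a b = γ b a := by
    intro a b
    rw [hγ, hγ]
    exact integral_congr_ae (Filter.Eventually.of_forall fun x => mul_comm _ _)
  set d : Fin n → ℝ := θdot t with hd
  have key : (∀ j : Fin n, ∑ i : Fin n, γ i j * d i = b j)
      ↔ (∀ k : Fin n, d k = ∑ j : Fin n, γInv k j * b j) := by
    have hmv : ∀ j : Fin n, (γ.mulVec d) j = ∑ i : Fin n, γ i j * d i := by
      intro j
      show ∑ i : Fin n, γ j i * d i = ∑ i : Fin n, γ i j * d i
      exact Finset.sum_congr rfl fun i _ => by rw [hsym j i]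
    have hmv2 : ∀ k : Fin n, (γInv.mulVec b) k = ∑ j : Fin n, γInv k j * b j := by
      intro k; rfl
    constructor
    · intro h k
      have hbd : γ.mulVec d = b := by
        funext j; rw [hmv j]; exact h j
      have hdb : d = γInv.mulVec b := by
        rw [← hbd, Matrix.mulVec_mulVec, hγInv.2, Matrix.one_mulVec]
      rw [← hmv2 k, ← hdb]
    · intro h j
      have hdb : d = γInv.mulVec b := by
        funext k; rw [h k, hmv2 k]
      have hgd : γ.mulVec d = b := by
        rw [hdb, Matrix.mulVec_mulVec, hγInv.1, Matrix.one_mulVec]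
      exact (hmv j).symm.trans (congrFun hgd j)
  constructor
  · intro h k
    exact (key.mp fun j => by rw [← hLHS j, h j, hRHS j]) k
  · intro h j
    rw [hLHS j, hRHS j]
    exact key.mpr h j
end
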